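/- Let g = e^{2f₁}g₁ + e^{2f₂}g₂ on M = M₁ × M₂ and let ∇ be the adapted Weyl connection with Lee form θ^g = −d₁f₂ − d₂f₁. Denote by θ₂ := −d₂f₁ the restriction of θ^g to TM₂. Then for every vector field X₁ lifted from M₁ and X₂ lifted from M₂, (∇_{X₁}θ₂)(X₂) = −(d₁d₂f₁)(X₁, X₂). Consequently, θ₂ is ∇-parallel in the direction of TM₁ if and only if d₁d₂f₁ = 0. -/

import Mathlib

/-!
The adapted Weyl connection satisfies `∇_{X₁}X₂ = 0` on lifted fields. Indeed, the Koszul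
formula shows that the `TM₂`-component of the Levi-Civita derivative `∇^g_{X₁}X₂` is
`X₁(f₂) X₂`, and the correction term `θ(X₁) X₂ = -X₁(f₂) X₂` cancels it. Since `θ₂` is the
metric dual of a vector tangent to `M₂`, `θ₂(∇_{X₁}X₂) = 0`, so `(∇_{X₁}θ₂)(X₂) = X₁(θ₂(X₂))`,
which is `-(d₁d₂f₁)(X₁, X₂)`.
-/

open Real
open scoped ContDiff

noncomputable section

/-- A Riemannian metric on the "vector space manifold" `E`, encoded as a smooth family of
symmetric positive definite bilinear forms, given as a raw function `g : E → E → E → ℝ`. -/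
structure IsRiemannianMetric {E : Type*} [NormedAddCommGroup E] [NormedSpace ℝ E]
    (g : E → E → E → ℝ) : Prop where
  smooth : ∀ u v : E, ContDiff ℝ ∞ (fun x => g x u v)
  symm : ∀ x u v, g x u v = g x v u
  add_left : ∀ x u u' v, g x (u + u') v = g x u v + g x u' v
  smul_left : ∀ x (c : ℝ) (u v : E), g x (c • u) v = c * g x u v
  posdef : ∀ x (v : E), v ≠ 0 → 0 < g x v v

/-- `D` is the Levi-Civita covariant derivative of the metric `g`: it is metric
(`∇ g = 0`, expressed through the Leibniz rule for `g`) and torsion-free. -/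
structure IsLeviCivita {E : Type*} [NormedAddCommGroup E] [NormedSpace ℝ E]
    (g : E → E → E → ℝ) (D : (E → E) → (E → E) → (E → E)) : Prop where
  compat : ∀ X Y Z : E → E, ContDiff ℝ ∞ X → ContDiff ℝ ∞ Y → ContDiff ℝ ∞ Z → ∀ x,
    fderiv ℝ (fun y => g y (Y y) (Z y)) x (X x) =
      g x (D X Y x) (Z x) + g x (Y x) (D X Z x)
  torsion_free : ∀ X Y : E → E, ContDiff ℝ ∞ X → ContDiff ℝ ∞ Y → ∀ x,
    D X Y x - D Y X x = fderiv ℝ Y x (X x) - fderiv ℝ X x (Y x)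

/-- `D` is a Weyl connection for the (conformal class of the) metric `g`, with Lee form `θ`
with respect to `g`: it is torsion-free and satisfies `∇ g = -2 θ ⊗ g`. -/
structure IsWeylConnection {E : Type*} [NormedAddCommGroup E] [NormedSpace ℝ E]
    (g : E → E → E → ℝ) (θ : E → E → ℝ) (D : (E → E) → (E → E) → (E → E)) : Prop where
  compat : ∀ X Y Z : E → E, ContDiff ℝ ∞ X → ContDiff ℝ ∞ Y → ContDiff ℝ ∞ Z → ∀ x,
    fderiv ℝ (fun y => g y (Y y) (Z y)) x (X x) =
      -2 * θ x (X x) * g x (Y x) (Z x) + g x (D X Y x) (Z x) + g x (Y x) (D X Z x)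
  torsion_free : ∀ X Y : E → E, ContDiff ℝ ∞ X → ContDiff ℝ ∞ Y → ∀ x,
    D X Y x - D Y X x = fderiv ℝ Y x (X x) - fderiv ℝ X x (Y x)

variable {E₁ E₂ : Type*} [NormedAddCommGroup E₁] [NormedSpace ℝ E₁]
  [NormedAddCommGroup E₂] [NormedSpace ℝ E₂]

/-- The vector field on `M₁ × M₂` obtained by lifting a vector field on the factor `M₁`. -/
def liftVF₁ (X : E₁ → E₁) : E₁ × E₂ → E₁ × E₂ := fun x => (X x.1, 0)

/-- The vector field on `M₁ × M₂` obtained by lifting a vector field on the factor `M₂`. -/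
def liftVF₂ (X : E₂ → E₂) : E₁ × E₂ → E₁ × E₂ := fun x => (0, X x.2)

/-- The conformal product metric `e^{2 f₁} g₁ + e^{2 f₂} g₂` on `M₁ × M₂`. -/
def conformalProductMetric (f₁ f₂ : E₁ × E₂ → ℝ) (g₁ : E₁ → E₁ → E₁ → ℝ)
    (g₂ : E₂ → E₂ → E₂ → ℝ) : (E₁ × E₂) → (E₁ × E₂) → (E₁ × E₂) → ℝ :=
  fun x u v => exp (2 * f₁ x) * g₁ x.1 u.1 v.1 + exp (2 * f₂ x) * g₂ x.2 u.2 v.2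

end

theorem fderiv_clm_apply_of_fderiv_apply_eq_zero {𝕜 E F G : Type*} [NontriviallyNormedField 𝕜]
    [NormedAddCommGroup E] [NormedSpace 𝕜 E] [NormedAddCommGroup F] [NormedSpace 𝕜 F]
    [NormedAddCommGroup G] [NormedSpace 𝕜 G] {c : E → F →L[𝕜] G} {u : E → F} {x v : E}
    (hc : DifferentiableAt 𝕜 c x) (hu : DifferentiableAt 𝕜 u x) (huv : fderiv 𝕜 u x v = 0) :
    fderiv 𝕜 (fun y => c y (u y)) x v = fderiv 𝕜 (fun y => c y (u x)) x v := by
  rw [fderiv_clm_apply hc hu, fderiv_clm_apply hc (differentiableAt_const _)]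
  simp [huv]

section LeviCivita

variable {E : Type*} [NormedAddCommGroup E] [NormedSpace ℝ E] {g : E → E → E → ℝ}
  {D : (E → E) → (E → E) → (E → E)}

theorem IsLeviCivita.apply_eq_apply_of_fderiv_eq (hD : IsLeviCivita g D) {X Y : E → E}
    (hX : ContDiff ℝ ∞ X) (hY : ContDiff ℝ ∞ Y) {x : E}
    (h : fderiv ℝ Y x (X x) = fderiv ℝ X x (Y x)) : D X Y x = D Y X x := by
  rw [← sub_eq_zero, hD.torsion_free X Y hX hY x, h, sub_self]

theorem IsLeviCivita.apply_eq_neg_of_forall_eq_zero (hD : IsLeviCivita g D) {X Y Z : E → E}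
    (hX : ContDiff ℝ ∞ X) (hY : ContDiff ℝ ∞ Y) (hZ : ContDiff ℝ ∞ Z)
    (hYZ : ∀ y, g y (Y y) (Z y) = 0) (x : E) :
    g x (D X Y x) (Z x) = -g x (Y x) (D X Z x) := by
  have h := hD.compat X Y Z hX hY hZ x
  simp only [hYZ, fderiv_const_apply, zero_apply] at h
  linarith

theorem IsLeviCivita.koszul_const (hD : IsLeviCivita g D) (hsymm : ∀ x u v, g x u v = g x v u)
    (x u v w : E) :
    2 * g x (D (fun _ => u) (fun _ => v) x) w =
      fderiv ℝ (fun y => g y v w) x u + fderiv ℝ (fun y => g y u w) x v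
        - fderiv ℝ (fun y => g y u v) x w := by
  have comm : ∀ a b : E, D (fun _ => a) (fun _ => b) x = D (fun _ => b) (fun _ => a) x :=
    fun a b => hD.apply_eq_apply_of_fderiv_eq contDiff_const contDiff_const (by simp)
  have compat : ∀ a b c : E, fderiv ℝ (fun y => g y b c) x a =
      g x (D (fun _ => a) (fun _ => b) x) c + g x b (D (fun _ => a) (fun _ => c) x) :=
    fun a b c => hD.compat _ _ _ contDiff_const contDiff_const contDiff_const x
  rw [compat u v w, compat v u w, compat w u v, comm v u, comm w u, comm w v,
    hsymm x v (D _ _ x), hsymm x u (D _ _ x)]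
  ring

end LeviCivita

namespace IsRiemannianMetric

variable {E : Type*} [NormedAddCommGroup E] [NormedSpace ℝ E] {g : E → E → E → ℝ}

theorem zero_left (hg : IsRiemannianMetric g) (x v : E) : g x 0 v = 0 := by
  simpa using hg.smul_left x 0 0 v

theorem zero_right (hg : IsRiemannianMetric g) (x u : E) : g x u 0 = 0 := by
  rw [hg.symm, hg.zero_left]

end IsRiemannianMetric

section ConformalProduct

variable {E₁ E₂ : Type*} [NormedAddCommGroup E₁] [NormedSpace ℝ E₁]
  [NormedAddCommGroup E₂] [NormedSpace ℝ E₂]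

theorem ContDiff.liftVF₁ {n : WithTop ℕ∞} {X₁ : E₁ → E₁} (h : ContDiff ℝ n X₁) :
    ContDiff ℝ n (liftVF₁ (E₂ := E₂) X₁) :=
  (h.comp contDiff_fst).prodMk contDiff_const

theorem ContDiff.liftVF₂ {n : WithTop ℕ∞} {X₂ : E₂ → E₂} (h : ContDiff ℝ n X₂) :
    ContDiff ℝ n (liftVF₂ (E₁ := E₁) X₂) :=
  contDiff_const.prodMk (h.comp contDiff_snd)

theorem fderiv_liftVF₁_apply {X₁ : E₁ → E₁} {x : E₁ × E₂} (h : DifferentiableAt ℝ X₁ x.1)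
    (v : E₁ × E₂) : fderiv ℝ (liftVF₁ X₁) x v = (fderiv ℝ X₁ x.1 v.1, 0) := by
  have hX : HasFDerivAt (liftVF₁ X₁)
      (((fderiv ℝ X₁ x.1).comp (ContinuousLinearMap.fst ℝ E₁ E₂)).prod 0) x :=
    (h.hasFDerivAt.comp x hasFDerivAt_fst).prodMk (hasFDerivAt_const 0 x)
  rw [hX.fderiv]
  rfl

theorem fderiv_liftVF₂_apply {X₂ : E₂ → E₂} {x : E₁ × E₂} (h : DifferentiableAt ℝ X₂ x.2)
    (v : E₁ × E₂) : fderiv ℝ (liftVF₂ X₂) x v = (0, fderiv ℝ X₂ x.2 v.2) := by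
  have hX : HasFDerivAt (liftVF₂ X₂)
      ((0 : E₁ × E₂ →L[ℝ] E₁).prod ((fderiv ℝ X₂ x.2).comp (ContinuousLinearMap.snd ℝ E₁ E₂))) x :=
    (hasFDerivAt_const 0 x).prodMk (h.hasFDerivAt.comp x hasFDerivAt_snd)
  rw [hX.fderiv]
  rfl

variable {g₁ : E₁ → E₁ → E₁ → ℝ} {g₂ : E₂ → E₂ → E₂ → ℝ} {f₁ f₂ : E₁ × E₂ → ℝ}

local notation "G" => conformalProductMetric f₁ f₂ g₁ g₂

theorem conformalProductMetric_symm (hg₁ : IsRiemannianMetric g₁)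
    (hg₂ : IsRiemannianMetric g₂) (x u v : E₁ × E₂) : G x u v = G x v u := by
  simp only [conformalProductMetric, hg₁.symm x.1 u.1, hg₂.symm x.2 u.2]

theorem conformalProductMetric_add_left (hg₁ : IsRiemannianMetric g₁)
    (hg₂ : IsRiemannianMetric g₂) (x u u' v : E₁ × E₂) : G x (u + u') v = G x u v + G x u' v := by
  simp only [conformalProductMetric, Prod.fst_add, Prod.snd_add, hg₁.add_left, hg₂.add_left]
  ring

theorem conformalProductMetric_smul_left (hg₁ : IsRiemannianMetric g₁)
    (hg₂ : IsRiemannianMetric g₂) (x : E₁ × E₂) (c : ℝ) (u v : E₁ × E₂) :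
    G x (c • u) v = c * G x u v := by
  simp only [conformalProductMetric, Prod.smul_fst, Prod.smul_snd, hg₁.smul_left, hg₂.smul_left]
  ring

theorem conformalProductMetric_sub_left (hg₁ : IsRiemannianMetric g₁)
    (hg₂ : IsRiemannianMetric g₂) (x u u' v : E₁ × E₂) : G x (u - u') v = G x u v - G x u' v := by
  rw [sub_eq_add_neg, ← neg_one_smul ℝ u', conformalProductMetric_add_left hg₁ hg₂,
    conformalProductMetric_smul_left hg₁ hg₂]
  ring

theorem conformalProductMetric_fst_snd (hg₁ : IsRiemannianMetric g₁)
    (hg₂ : IsRiemannianMetric g₂) (x : E₁ × E₂) (u : E₁) (v : E₂) : G x (u, 0) (0, v) = 0 := by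
  simp [conformalProductMetric, hg₁.zero_right, hg₂.zero_left]

theorem fderiv_conformalProductMetric_snd_snd (hg₁ : IsRiemannianMetric g₁)
    (hg₂ : IsRiemannianMetric g₂) {x : E₁ × E₂} (hf₂ : DifferentiableAt ℝ f₂ x)
    (u : E₁) (a b : E₂) :
    fderiv ℝ (fun y => G y (0, a) (0, b)) x (u, 0) =
      2 * fderiv ℝ f₂ x (u, 0) * G x (0, a) (0, b) := by
  have hexp : HasFDerivAt (fun y => exp (2 * f₂ y))
      (exp (2 * f₂ x) • (2 : ℝ) • fderiv ℝ f₂ x) x :=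
    (hasDerivAt_exp _).comp_hasFDerivAt x (hf₂.hasFDerivAt.const_mul 2)
  have hg : HasFDerivAt (fun y : E₁ × E₂ => g₂ y.2 a b)
      ((fderiv ℝ (fun z => g₂ z a b) x.2).comp (ContinuousLinearMap.snd ℝ E₁ E₂)) x :=
    ((hg₂.smooth a b).differentiable (by simp) x.2).hasFDerivAt.comp x hasFDerivAt_snd
  have hG : ∀ y, G y (0, a) (0, b) = exp (2 * f₂ y) * g₂ y.2 a b := fun y => by
    simp [conformalProductMetric, hg₁.zero_left]
  have hmul : HasFDerivAt (fun y => exp (2 * f₂ y) * g₂ y.2 a b) _ x := hexp.mul hg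
  simp only [hG, hmul.fderiv, add_apply, smul_apply, ContinuousLinearMap.comp_apply,
    ContinuousLinearMap.coe_snd', map_zero, smul_eq_mul, mul_zero, zero_add]
  ring

theorem IsLeviCivita.conformalProductMetric_const (hg₁ : IsRiemannianMetric g₁)
    (hg₂ : IsRiemannianMetric g₂)
    {Dg : (E₁ × E₂ → E₁ × E₂) → (E₁ × E₂ → E₁ × E₂) → (E₁ × E₂ → E₁ × E₂)}
    (hDg : IsLeviCivita G Dg) {x : E₁ × E₂} (hf₂ : DifferentiableAt ℝ f₂ x) (u : E₁) (a b : E₂) :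
    G x (Dg (fun _ => (0, a)) (fun _ => (u, 0)) x) (0, b) =
      fderiv ℝ f₂ x (u, 0) * G x (0, a) (0, b) := by
  have h := hDg.koszul_const (conformalProductMetric_symm hg₁ hg₂) x (0, a) (u, 0) (0, b)
  have hub : (fun y => G y (u, 0) (0, b)) = fun _ => 0 :=
    funext fun y => conformalProductMetric_fst_snd hg₁ hg₂ y u b
  have hau : (fun y => G y (0, a) (u, 0)) = fun _ => 0 := funext fun y => by
    rw [conformalProductMetric_symm hg₁ hg₂, conformalProductMetric_fst_snd hg₁ hg₂]
  rw [hub, hau, fderiv_conformalProductMetric_snd_snd hg₁ hg₂ hf₂] at h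
  simp only [fderiv_const_apply, zero_apply] at h
  linarith

theorem IsLeviCivita.conformalProductMetric_liftVF (hg₁ : IsRiemannianMetric g₁)
    (hg₂ : IsRiemannianMetric g₂)
    {Dg : (E₁ × E₂ → E₁ × E₂) → (E₁ × E₂ → E₁ × E₂) → (E₁ × E₂ → E₁ × E₂)}
    (hDg : IsLeviCivita G Dg) {X₁ : E₁ → E₁} {X₂ : E₂ → E₂} (hX₁ : ContDiff ℝ ∞ X₁)
    (hX₂ : ContDiff ℝ ∞ X₂) {x : E₁ × E₂} (hf₂ : DifferentiableAt ℝ f₂ x) (b : E₂) :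
    G x (Dg (liftVF₁ X₁) (liftVF₂ X₂) x) (0, b) =
      fderiv ℝ f₂ x (X₁ x.1, 0) * G x (0, X₂ x.2) (0, b) := by
  have dX₁ : DifferentiableAt ℝ X₁ x.1 := hX₁.differentiable (by simp) x.1
  have dX₂ : DifferentiableAt ℝ X₂ x.2 := hX₂.differentiable (by simp) x.2
  have symm := conformalProductMetric_symm (f₁ := f₁) (f₂ := f₂) hg₁ hg₂
  have orth := conformalProductMetric_fst_snd (f₁ := f₁) (f₂ := f₂) hg₁ hg₂
  have hXY : Dg (liftVF₁ X₁) (liftVF₂ X₂) x = Dg (liftVF₂ X₂) (liftVF₁ X₁) x :=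
    hDg.apply_eq_apply_of_fderiv_eq hX₁.liftVF₁ hX₂.liftVF₂ <| by
      simp [fderiv_liftVF₁_apply dX₁, fderiv_liftVF₂_apply dX₂, liftVF₁, liftVF₂]
  have hYZ : Dg (liftVF₂ X₂) (fun _ => (0, b)) x =
      Dg (fun _ => (0, b)) (liftVF₂ X₂) x - (0, fderiv ℝ X₂ x.2 b) := by
    have h := hDg.torsion_free _ (fun _ => ((0 : E₁), b)) hX₂.liftVF₂ contDiff_const x
    rw [fderiv_const_apply, zero_apply, zero_sub, fderiv_liftVF₂_apply dX₂] at h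
    rw [sub_eq_iff_eq_add.mp h, neg_add_eq_sub]
  -- `Dg` is not known to be tensorial, so the lifted fields are traded for constant ones
  -- (where the Koszul formula applies) through pairings that vanish identically.
  calc G x (Dg (liftVF₁ X₁) (liftVF₂ X₂) x) (0, b)
      = G x (Dg (liftVF₂ X₂) (liftVF₁ X₁) x) (0, b) := by rw [hXY]
    _ = -G x (X₁ x.1, 0) (Dg (liftVF₂ X₂) (fun _ => (0, b)) x) :=
        hDg.apply_eq_neg_of_forall_eq_zero hX₂.liftVF₂ hX₁.liftVF₁ contDiff_const
          (fun y => orth y _ b) x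
    _ = -G x (Dg (fun _ => (0, b)) (liftVF₂ X₂) x) (X₁ x.1, 0) := by
        rw [hYZ, symm, conformalProductMetric_sub_left hg₁ hg₂, symm x (0, _), orth, sub_zero]
    _ = G x (0, X₂ x.2) (Dg (fun _ => (0, b)) (fun _ => (X₁ x.1, 0)) x) := by
        rw [hDg.apply_eq_neg_of_forall_eq_zero contDiff_const hX₂.liftVF₂ contDiff_const
          (fun y => by rw [symm]; exact orth y _ _) x, neg_neg]
        rfl
    _ = fderiv ℝ f₂ x (X₁ x.1, 0) * G x (0, b) (0, X₂ x.2) := by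
        rw [symm]; exact hDg.conformalProductMetric_const hg₁ hg₂ hf₂ _ _ _
    _ = fderiv ℝ f₂ x (X₁ x.1, 0) * G x (0, X₂ x.2) (0, b) := by rw [symm]

section AdaptedWeyl

variable {Dg D : (E₁ × E₂ → E₁ × E₂) → (E₁ × E₂ → E₁ × E₂) → (E₁ × E₂ → E₁ × E₂)}
  {θ : E₁ × E₂ → E₁ × E₂ → ℝ} {θs : E₁ × E₂ → E₁ × E₂}

theorem conformalProductMetric_adaptedWeyl_liftVF_snd (hg₁ : IsRiemannianMetric g₁)
    (hg₂ : IsRiemannianMetric g₂) (hDg : IsLeviCivita G Dg)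
    (hθ : ∀ x v, θ x v = -(fderiv ℝ f₂ x (v.1, 0)) - fderiv ℝ f₁ x (0, v.2))
    (hD : ∀ X Y x, D X Y x =
      Dg X Y x + θ x (X x) • Y x + θ x (Y x) • X x - G x (X x) (Y x) • θs x)
    {X₁ : E₁ → E₁} {X₂ : E₂ → E₂} (hX₁ : ContDiff ℝ ∞ X₁) (hX₂ : ContDiff ℝ ∞ X₂)
    {x : E₁ × E₂} (hf₂ : DifferentiableAt ℝ f₂ x) (b : E₂) :
    G x (D (liftVF₁ X₁) (liftVF₂ X₂) x) (0, b) = 0 := by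
  have orth := conformalProductMetric_fst_snd (f₁ := f₁) (f₂ := f₂) hg₁ hg₂
  rw [hD, conformalProductMetric_sub_left hg₁ hg₂, conformalProductMetric_add_left hg₁ hg₂,
    conformalProductMetric_add_left hg₁ hg₂, conformalProductMetric_smul_left hg₁ hg₂,
    conformalProductMetric_smul_left hg₁ hg₂, conformalProductMetric_smul_left hg₁ hg₂,
    hDg.conformalProductMetric_liftVF hg₁ hg₂ hX₁ hX₂ hf₂, hθ]
  simp only [liftVF₁, liftVF₂, orth, Prod.mk_zero_zero, map_zero]
  ring

theorem leeForm_snd_eq_conformalProductMetric (hg₁ : IsRiemannianMetric g₁)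
    (hg₂ : IsRiemannianMetric g₂)
    (hθ : ∀ x v, θ x v = -(fderiv ℝ f₂ x (v.1, 0)) - fderiv ℝ f₁ x (0, v.2))
    (hθs : ∀ x v, G x (θs x) v = θ x v) {θ₂ : E₁ × E₂ → E₁ × E₂ → ℝ}
    (hθ₂ : ∀ x v, θ₂ x v = -(fderiv ℝ f₁ x ((0 : E₁), v.2))) (x w : E₁ × E₂) :
    θ₂ x w = G x w (0, (θs x).2) := by
  have h := hθs x (0, w.2)
  simp only [hθ, Prod.mk_zero_zero, map_zero, neg_zero, zero_sub] at h
  rw [hθ₂, ← h]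
  simp [conformalProductMetric, hg₁.zero_right, hg₂.symm x.2 w.2]

end AdaptedWeyl

end ConformalProduct

/-- Let `g = e^{2f₁}g₁ + e^{2f₂}g₂` on `M₁ × M₂` and `∇` the adapted Weyl
connection with Lee form `θ^g = −d₁f₂ − d₂f₁`; let `θ₂ := −d₂f₁` be the restriction of `θ^g`
to `TM₂`.  Then for lifted vector fields `X₁, X₂`, `(∇_{X₁}θ₂)(X₂) = −(d₁d₂f₁)(X₁, X₂)`.
Consequently, `θ₂` is `∇`-parallel in the direction of `TM₁` iff `d₁d₂f₁ = 0`. -/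
theorem adapted_weyl_lee_form_parallel_iff
    {E₁ E₂ : Type*} [NormedAddCommGroup E₁] [NormedSpace ℝ E₁]
    [NormedAddCommGroup E₂] [NormedSpace ℝ E₂]
    (g₁ : E₁ → E₁ → E₁ → ℝ) (g₂ : E₂ → E₂ → E₂ → ℝ)
    (hg₁ : IsRiemannianMetric g₁) (hg₂ : IsRiemannianMetric g₂)
    (f₁ f₂ : E₁ × E₂ → ℝ) (hf₁ : ContDiff ℝ ∞ f₁) (hf₂ : ContDiff ℝ ∞ f₂)
    (Dg : (E₁ × E₂ → E₁ × E₂) → (E₁ × E₂ → E₁ × E₂) → (E₁ × E₂ → E₁ × E₂))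
    (hDg : IsLeviCivita (conformalProductMetric f₁ f₂ g₁ g₂) Dg)
    (θ : E₁ × E₂ → E₁ × E₂ → ℝ)
    (hθ : ∀ x v, θ x v = -(fderiv ℝ f₂ x (v.1, 0)) - fderiv ℝ f₁ x (0, v.2))
    (θs : E₁ × E₂ → E₁ × E₂)
    (hθs : ∀ x v, conformalProductMetric f₁ f₂ g₁ g₂ x (θs x) v = θ x v)
    -- the adapted Weyl connection
    (D : (E₁ × E₂ → E₁ × E₂) → (E₁ × E₂ → E₁ × E₂) → (E₁ × E₂ → E₁ × E₂))
    (hD : ∀ X Y x, D X Y x = Dg X Y x + θ x (X x) • Y x + θ x (Y x) • X x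
      - conformalProductMetric f₁ f₂ g₁ g₂ x (X x) (Y x) • θs x)
    -- the restriction `θ₂ = −d₂f₁` of the Lee form to `TM₂`
    (θ₂ : E₁ × E₂ → E₁ × E₂ → ℝ)
    (hθ₂ : ∀ x v, θ₂ x v = -(fderiv ℝ f₁ x ((0 : E₁), v.2))) :
    (∀ (X₁ : E₁ → E₁) (X₂ : E₂ → E₂), ContDiff ℝ ∞ X₁ → ContDiff ℝ ∞ X₂ → ∀ x,
        -- `(∇_{X₁}θ₂)(X₂) = X₁(θ₂(X₂)) − θ₂(∇_{X₁}X₂) = −(d₁d₂f₁)(X₁, X₂)`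
        fderiv ℝ (fun y => θ₂ y (liftVF₂ X₂ y)) x (liftVF₁ X₁ x)
            - θ₂ x (D (liftVF₁ X₁) (liftVF₂ X₂) x) =
          -(fderiv ℝ (fun y => fderiv ℝ f₁ y ((0 : E₁), X₂ y.2)) x (X₁ x.1, (0 : E₂))))
    ∧ ((∀ (X₁ : E₁ → E₁) (X₂ : E₂ → E₂), ContDiff ℝ ∞ X₁ → ContDiff ℝ ∞ X₂ → ∀ x,
          fderiv ℝ (fun y => θ₂ y (liftVF₂ X₂ y)) x (liftVF₁ X₁ x)
            - θ₂ x (D (liftVF₁ X₁) (liftVF₂ X₂) x) = 0) ↔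
        (∀ (x : E₁ × E₂) (v₁ : E₁) (v₂ : E₂),
          fderiv ℝ (fun y => fderiv ℝ f₁ y ((0 : E₁), v₂)) x (v₁, (0 : E₂)) = 0)) := by
  have covDeriv : ∀ (X₁ : E₁ → E₁) (X₂ : E₂ → E₂), ContDiff ℝ ∞ X₁ → ContDiff ℝ ∞ X₂ → ∀ x,
      fderiv ℝ (fun y => θ₂ y (liftVF₂ X₂ y)) x (liftVF₁ X₁ x)
          - θ₂ x (D (liftVF₁ X₁) (liftVF₂ X₂) x) =
        -(fderiv ℝ (fun y => fderiv ℝ f₁ y ((0 : E₁), X₂ y.2)) x (X₁ x.1, (0 : E₂))) := by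
    intro X₁ X₂ hX₁ hX₂ x
    have hθ₂X₂ : (fun y => θ₂ y (liftVF₂ X₂ y)) = fun y => -fderiv ℝ f₁ y (0, X₂ y.2) :=
      funext fun y => hθ₂ y _
    rw [leeForm_snd_eq_conformalProductMetric hg₁ hg₂ hθ hθs hθ₂,
      conformalProductMetric_adaptedWeyl_liftVF_snd hg₁ hg₂ hDg hθ hD hX₁ hX₂
        (hf₂.differentiable (by simp) x),
      sub_zero, hθ₂X₂, fderiv_fun_neg]
    rfl
  refine ⟨covDeriv, fun h x v₁ v₂ => ?_, fun h X₁ X₂ hX₁ hX₂ x => ?_⟩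
  · exact neg_eq_zero.mp ((covDeriv _ _ contDiff_const contDiff_const x).symm.trans
      (h (fun _ => v₁) (fun _ => v₂) contDiff_const contDiff_const x))
  · have hdf₁ : DifferentiableAt ℝ (fderiv ℝ f₁) x :=
      (hf₁.fderiv_right (m := 1) (WithTop.coe_le_coe.mpr le_top)).differentiable one_ne_zero x
    rw [covDeriv X₁ X₂ hX₁ hX₂ x, neg_eq_zero]
    exact (fderiv_clm_apply_of_fderiv_apply_eq_zero (u := liftVF₂ X₂) (v := (X₁ x.1, 0)) hdf₁
      (hX₂.liftVF₂.differentiable (by simp) x)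
      (by simp [fderiv_liftVF₂_apply (hX₂.differentiable (by simp) x.2)])).trans
      (h x (X₁ x.1) (X₂ x.2))
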